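/- arXiv:2305.00953 — 2 statements merged into one kernel-verified Lean document; each statement's English description precedes it below -/
import Mathlib

section
/- Let n ≥ 1, let T : {0,…,n−1} → ℝ be monotone nondecreasing, and let l, g, ε be reals with ε > 0, T(0) ≤ l, T(n−1) ≥ g, and T(j+1) − T(j) ≤ ε for every j < n−1. Then for all reals r, r' with l ≤ r ≤ g, l ≤ r' ≤ g, and r + ε ≤ r', the number of indices j with T(j) ≤ r is strictly smaller than the number of indices j with T(j) ≤ r'. -/
open Classical in
/-- Let `n ≥ 1`, let `T : Fin n → ℝ` be monotone nondecreasing and let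
`l, g, ε` be reals with `ε > 0`, `T 0 ≤ l`, `T (n-1) ≥ g`, and consecutive gaps at most
`ε`. Then for any `r, r' ∈ [l, g]` with `r + ε ≤ r'`, the number of indices `j` with
`T j ≤ r` is strictly smaller than the number of indices `j` with `T j ≤ r'`. -/
theorem threshold_count_lt (n : ℕ) (hn : 1 ≤ n) (T : Fin n → ℝ) (hT : Monotone T)
    (l g ε : ℝ) (hε : 0 < ε)
    (hl : T ⟨0, hn⟩ ≤ l) (hg : g ≤ T ⟨n - 1, Nat.sub_lt hn Nat.one_pos⟩)
    (hgap : ∀ (j : ℕ) (h : j + 1 < n), T ⟨j + 1, h⟩ - T ⟨j, Nat.lt_of_succ_lt h⟩ ≤ ε)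
    (r r' : ℝ) (hr1 : l ≤ r) (hr2 : r ≤ g) (hr1' : l ≤ r') (hr2' : r' ≤ g)
    (hrr' : r + ε ≤ r') :
    (Finset.univ.filter fun j : Fin n => T j ≤ r).card <
      (Finset.univ.filter fun j : Fin n => T j ≤ r').card := by
  have hrr : r ≤ r' := by linarith
  have hP : ∃ k : ℕ, ∃ h : k < n, r < T ⟨k, h⟩ := by
    refine ⟨n - 1, Nat.sub_lt hn Nat.one_pos, ?_⟩
    calc r < r' := by linarith
    _ ≤ g := hr2'
    _ ≤ _ := hg
  classical
  let m := Nat.find hP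
  obtain ⟨hmn, hm⟩ : ∃ h : m < n, r < T ⟨m, h⟩ := Nat.find_spec hP
  have hm0 : m ≠ 0 := by
    intro h0
    have : r < T ⟨0, hn⟩ := by
      have := hm
      simp only [h0] at this
      exact this
    linarith
  obtain ⟨p, hp⟩ := Nat.exists_eq_succ_of_ne_zero hm0
  have hpn : p < n := Nat.lt_of_succ_lt (hp ▸ hmn)
  have hprev : T ⟨p, hpn⟩ ≤ r := by
    by_contra hc
    push_neg at hc
    have : m ≤ p := Nat.find_le ⟨hpn, hc⟩
    omega
  have hp1n : p + 1 < n := by omega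
  have hgap' : T ⟨m, hmn⟩ ≤ r' := by
    have h1 := hgap p hp1n
    have heq : (⟨p + 1, hp1n⟩ : Fin n) = ⟨m, hmn⟩ := by simp [hp]
    rw [heq] at h1
    linarith
  apply Finset.card_lt_card
  constructor
  · intro j hj
    simp only [Finset.mem_filter, Finset.mem_univ, true_and] at hj ⊢
    linarith
  · intro hsub
    have := hsub (Finset.mem_filter.mpr ⟨Finset.mem_univ _, hgap'⟩)
    simp only [Finset.mem_filter] at this
    linarith [this.2]
end

section
/- (Minimizing variant of the ε-correspondence.) Let G be a discounted-sum game with agents Ω and let ε > 0. Suppose each agent i has a multi-satisficing goal ⟨≤, T_i⟩ such that: (1) the relation is ≤; (2) the smallest threshold a_i of T_i satisfies a_i ≤ R_i(ρ) for every play ρ; (3) the largest threshold z_i of T_i satisfies z_i ≥ R_i(ρ) for every play ρ; and (4) every two consecutive thresholds t_j, t_{j+1} of T_i satisfy t_{j+1} − t_j ≤ ε. Then for every strategy profile σ that is a Nash equilibrium of the resulting multi-satisficing game, no agent i has a strategy σ'_i with R_i(ρ_{⟨σ_{−i},σ'_i⟩}) ≤ R_i(ρ_σ) − ε; that is, σ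 is a modified ε-equilibrium in which no agent can unilaterally decrease his cumulative reward by at least ε. -/
/-- A discounted-sum game: finite nonempty state set `V` with initial state `v0`,
`k` agents each with a finite nonempty action set `A i`, deterministic transition
function `tr`, integer discount factor `γ > 1`, and reward function `wt`
assigning each state-decision pair an integer reward for each agent. -/
structure DSGame where
  V : Type
  fintypeV : Fintype V
  nonemptyV : Nonempty V
  v0 : V
  k : ℕ
  A : Fin k → Type
  fintypeA : ∀ i, Fintype (A i)
  nonemptyA : ∀ i, Nonempty (A i)
  tr : V → (∀ i, A i) → V
  γ : ℤ
  hγ : 1 < γ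
  wt : V → (∀ i, A i) → Fin k → ℤ

namespace DSGame

variable (G : DSGame)

instance : Fintype G.V := G.fintypeV
instance : Nonempty G.V := G.nonemptyV
instance (i : Fin G.k) : Fintype (G.A i) := G.fintypeA i
instance (i : Fin G.k) : Nonempty (G.A i) := G.nonemptyA i

/-- The set of decisions `D = A_0 × ⋯ × A_{k-1}`. -/
abbrev D := ∀ i : Fin G.k, G.A i

instance : Nonempty G.D := ⟨fun i => Classical.arbitrary (G.A i)⟩
instance : Nonempty (G.V × G.D) := ⟨Classical.arbitrary G.V, Classical.arbitrary G.D⟩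

/-- A play from state `v`: an infinite sequence of state-decision pairs starting at `v`
and following the transition function. -/
def IsPlayFrom (v : G.V) (ρ : ℕ → G.V × G.D) : Prop :=
  (ρ 0).1 = v ∧ ∀ j : ℕ, (ρ (j + 1)).1 = G.tr (ρ j).1 (ρ j).2

/-- A play of the game (from the initial state). -/
def IsPlay (ρ : ℕ → G.V × G.D) : Prop := G.IsPlayFrom G.v0 ρ

/-- Cumulative reward of agent `i` on a play: `R_i(ρ) = Σ_j W(v_j,d_j)[i]·γ^{-j}`. -/
noncomputable def reward (i : Fin G.k) (ρ : ℕ → G.V × G.D) : ℝ :=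
  ∑' j : ℕ, (G.wt (ρ j).1 (ρ j).2 i : ℝ) / (G.γ : ℝ) ^ j

/-- A (deterministic) strategy for agent `i`: a function of the observed history. -/
def Strategy (i : Fin G.k) : Type := List (G.V × G.D) → G.V → G.A i

/-- A strategy profile: one strategy per agent. -/
abbrev Profile := ∀ i : Fin G.k, G.Strategy i

/-- History (list of state-decision pairs seen so far) and current state after `j` steps
when the profile `π` is followed. -/
def hist (π : G.Profile) : ℕ → List (G.V × G.D) × G.V
  | 0 => ([], G.v0)
  | j + 1 =>
      let p : List (G.V × G.D) × G.V := hist π j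
      let d : G.D := fun i => π i p.1 p.2
      (p.1 ++ [(p.2, d)], G.tr p.2 d)

/-- The primary trace `ρ_π` of a strategy profile `π`. -/
def play (π : G.Profile) (j : ℕ) : G.V × G.D :=
  ((G.hist π j).2, fun i => π i (G.hist π j).1 (G.hist π j).2)

/-- `⟨π_{-i}, πi⟩`: the profile `π` with agent `i`'s strategy replaced by `πi`. -/
def updProf (π : G.Profile) (i : Fin G.k) (πi : G.Strategy i) : G.Profile :=
  Function.update π i πi

/-- An informed strategy for agent `j`: a function of the history, the current state
and the other agents' current actions. -/
def InfStrategy (j : Fin G.k) : Type :=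
  List (G.V × G.D) → G.V → (∀ i : Fin G.k, i ≠ j → G.A i) → G.A j

/-- A play `ρ` is consistent (from step `start` onward) with the informed strategy `s`
of agent `j` if at every step `m ≥ start` agent `j`'s action is the one prescribed
by `s` given the history, current state, and others' current actions. -/
def Consistent (j : Fin G.k) (s : G.InfStrategy j) (ρ : ℕ → G.V × G.D) (start : ℕ) : Prop :=
  ∀ m : ℕ, start ≤ m →
    (ρ m).2 j = s (List.ofFn fun l : Fin m => ρ l) (ρ m).1 (fun i _ => (ρ m).2 i)

/-- Agent `j` forces the set of plays `P` from the position consisting of the first `n`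
steps of `ρ`, where the other agents' components of the step-`n` decision are fixed to
those of `ρ n` (and the other agents are unconstrained from step `n+1` onward). -/
def ForcesFromPrefix (j : Fin G.k) (ρ : ℕ → G.V × G.D) (n : ℕ)
    (P : (ℕ → G.V × G.D) → Prop) : Prop :=
  ∃ s : G.InfStrategy j, ∀ ρ' : ℕ → G.V × G.D, G.IsPlay ρ' →
    (∀ m : ℕ, m < n → ρ' m = ρ m) →
    (∀ i : Fin G.k, i ≠ j → (ρ' n).2 i = (ρ n).2 i) →
    G.Consistent j s ρ' n → P ρ'

end DSGame

/-- Comparison relations for satisficing goals. -/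
inductive SRel | lt | le | gt | ge | eq | ne

def SRel.holds : SRel → ℝ → ℝ → Prop
  | .lt, a, b => a < b
  | .le, a, b => a ≤ b
  | .gt, a, b => a > b
  | .ge, a, b => a ≥ b
  | .eq, a, b => a = b
  | .ne, a, b => a ≠ b

/-- Nash equilibrium of a satisficing game: no agent `i` has a deviation `πi'` such that
its satisficing goal holds on the deviant trace but fails on the primary trace. -/
def SatNE (G : DSGame) (R : Fin G.k → SRel) (t : Fin G.k → ℚ) (π : G.Profile) : Prop :=
  ∀ (i : Fin G.k) (πi' : G.Strategy i),
    ¬ ((R i).holds (G.reward i (G.play (G.updProf π i πi'))) (t i) ∧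
       ¬ (R i).holds (G.reward i (G.play π)) (t i))

/-- `W`-NE of a satisficing game: a Nash equilibrium whose primary trace satisfies
exactly the goals of the agents in `W`. -/
def SatWNE (G : DSGame) (R : Fin G.k → SRel) (t : Fin G.k → ℚ)
    (W : Set (Fin G.k)) (π : G.Profile) : Prop :=
  SatNE G R t π ∧ ∀ i : Fin G.k, (R i).holds (G.reward i (G.play π)) (t i) ↔ i ∈ W

/-- Comparison relations allowed in multi-satisficing goals. -/
inductive MRel | lt | le | gt | ge

def MRel.holds : MRel → ℝ → ℝ → Prop
  | .lt, a, b => a < b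
  | .le, a, b => a ≤ b
  | .gt, a, b => a > b
  | .ge, a, b => a ≥ b

open Classical in
/-- Payoff of agent `i` with multi-satisficing goal `⟨R, T⟩` on play `ρ`:
the number of thresholds `t ∈ T` such that `R_i(ρ) R t` holds. -/
noncomputable def msPayoff (G : DSGame) (R : MRel) (T : List ℚ) (i : Fin G.k)
    (ρ : ℕ → G.V × G.D) : ℕ :=
  (T.filter fun tq => decide (R.holds (G.reward i ρ) (tq : ℝ))).length

/-- Nash equilibrium of a multi-satisficing game: no agent has a unilateral deviation
yielding a strictly greater payoff. -/
def MSNash (G : DSGame) (R : Fin G.k → MRel) (T : Fin G.k → List ℚ) (σ : G.Profile) : Prop :=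
  ∀ (i : Fin G.k) (σi' : G.Strategy i),
    ¬ (msPayoff G (R i) (T i) i (G.play σ) <
       msPayoff G (R i) (T i) i (G.play (G.updProf σ i σi')))

/-!
If a deviation lowers agent `i`'s reward from `R` to `R' ≤ R - ε`, then, since the
thresholds start at or below `R'`, end at or above `R` and climb in steps of at most `ε`,
some threshold `t` satisfies `R - ε ≤ t < R`. The deviation meets every `≤`-threshold the
equilibrium meets, and also `t`, so it strictly raises `i`'s payoff: a contradiction with
the Nash property.
-/

theorem List.exists_mem_sub_le_lt_of_isChain {α : Type*} [AddCommGroup α] [LinearOrder α]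
    [IsOrderedAddMonoid α] {ε x : α} :
    ∀ {l : List α}, (l.IsChain fun a b => b - a ≤ ε) → ∀ (hne : l ≠ []),
      l.head hne < x → x ≤ l.getLast hne → ∃ t ∈ l, x - ε ≤ t ∧ t < x
  | [a], _, _, hhead, hlast => absurd (hhead.trans_le hlast) (lt_irrefl a)
  | a :: b :: l, hl, _, hhead, hlast => by
    by_cases hb : b < x
    · obtain ⟨t, ht, hxt, htx⟩ :=
        exists_mem_sub_le_lt_of_isChain hl.tail (List.cons_ne_nil b l) hb hlast
      exact ⟨t, List.mem_cons_of_mem a ht, hxt, htx⟩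
    · have hab : b - ε ≤ a := sub_le_comm.mp hl.rel
      exact ⟨a, List.mem_cons_self, (sub_le_sub_right (not_lt.mp hb) ε).trans hab, hhead⟩

theorem List.length_filter_lt_length_filter {α : Type*} {p q : α → Bool} {l : List α} {a : α}
    (hpq : ∀ b ∈ l, p b → q b) (ha : a ∈ l) (hqa : q a) (hpa : p a = false) :
    (l.filter p).length < (l.filter q).length := by
  have hfilter : (l.filter q).filter p = l.filter p := by
    rw [List.filter_filter]
    exact List.filter_congr fun b hb => by
      cases hp : p b <;> simp [hp, hpq b hb]
  rw [← hfilter, List.length_filter_lt_length_iff_exists]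
  exact ⟨a, List.mem_filter.mpr ⟨ha, hqa⟩, Bool.eq_false_iff.mp hpa⟩

theorem DSGame.isPlay_play (G : DSGame) (π : G.Profile) : G.IsPlay (G.play π) :=
  ⟨rfl, fun _ => rfl⟩

/-- The coercion `List ℚ → List ℝ` in `msPayoff` and in `Chain'` hypotheses elaborates
through the list monad. -/
theorem List.coe_rat_eq_map (l : List ℚ) : (l : List ℝ) = l.map (↑) :=
  List.flatMap_pure_eq_map _ _

open Classical in
theorem msPayoff_le_lt_of_mem_of_le_of_lt (G : DSGame) (T : List ℚ) (i : Fin G.k)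
    {ρ ρ' : ℕ → G.V × G.D} {t : ℚ} (ht : t ∈ T) (hρ' : G.reward i ρ' ≤ t)
    (hρ : t < G.reward i ρ) :
    msPayoff G .le T i ρ < msPayoff G .le T i ρ' := by
  rw [msPayoff, msPayoff, List.coe_rat_eq_map]
  refine List.length_filter_lt_length_filter (fun s _ hs => ?_) (List.mem_map_of_mem ht)
    (decide_eq_true hρ') (decide_eq_false hρ.not_ge)
  exact decide_eq_true ((hρ'.trans hρ.le).trans (of_decide_eq_true hs))

theorem epsilon_equilibria_correspondence_min_general (G : DSGame) (ε : ℝ) (hε : 0 < ε)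
    (T : Fin G.k → List ℚ) (hne : ∀ i : Fin G.k, T i ≠ [])
    (hlow : ∀ (i : Fin G.k) (ρ : ℕ → G.V × G.D), G.IsPlay ρ →
      (((T i).head (hne i) : ℚ) : ℝ) ≤ G.reward i ρ)
    (hhigh : ∀ (i : Fin G.k) (ρ : ℕ → G.V × G.D), G.IsPlay ρ →
      G.reward i ρ ≤ (((T i).getLast (hne i) : ℚ) : ℝ))
    (hgap : ∀ i : Fin G.k, (T i).Chain' fun a b => (b : ℝ) - (a : ℝ) ≤ ε)
    (σ : G.Profile) (hσ : MSNash G (fun _ => MRel.le) T σ) :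
    ∀ (i : Fin G.k) (σi' : G.Strategy i),
      ¬ (G.reward i (G.play (G.updProf σ i σi')) ≤ G.reward i (G.play σ) - ε) := by
  intro i σi' hdev
  set L : List ℝ := (T i).map (↑)
  have hL : L ≠ [] := by simpa [L] using hne i
  have hchain : L.IsChain fun a b => b - a ≤ ε := by
    have h := hgap i
    rw [List.coe_rat_eq_map] at h
    exact h
  have hhead : L.head hL < G.reward i (G.play σ) := by
    rw [List.head_map]
    linarith [hlow i _ (G.isPlay_play (G.updProf σ i σi'))]
  have hlast : G.reward i (G.play σ) ≤ L.getLast hL := by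
    rw [List.getLast_map]
    exact hhigh i _ (G.isPlay_play σ)
  obtain ⟨_, htL, hεt, htR⟩ := List.exists_mem_sub_le_lt_of_isChain hchain hL hhead hlast
  obtain ⟨t, ht, rfl⟩ := List.mem_map.mp htL
  exact hσ i σi' (msPayoff_le_lt_of_mem_of_le_of_lt G (T i) i ht (hdev.trans hεt) htR)

/-- Minimizing variant of the ε-correspondence: if every agent `i` has a
multi-satisficing goal `⟨≤, T i⟩` whose smallest threshold lower-bounds and largest
threshold upper-bounds the cumulative reward of `i` on every play, and whose consecutive
thresholds differ by at most `ε`, then in every Nash equilibrium `σ` of the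
multi-satisficing game no agent can unilaterally decrease his cumulative reward by at
least `ε`. -/
theorem epsilon_equilibria_correspondence_min (G : DSGame) (ε : ℝ) (hε : 0 < ε)
    (T : Fin G.k → List ℚ) (hne : ∀ i : Fin G.k, T i ≠ [])
    (hsort : ∀ i : Fin G.k, (T i).Pairwise (· ≤ ·))
    (hlow : ∀ (i : Fin G.k) (ρ : ℕ → G.V × G.D), G.IsPlay ρ →
      (((T i).head (hne i) : ℚ) : ℝ) ≤ G.reward i ρ)
    (hhigh : ∀ (i : Fin G.k) (ρ : ℕ → G.V × G.D), G.IsPlay ρ →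
      G.reward i ρ ≤ (((T i).getLast (hne i) : ℚ) : ℝ))
    (hgap : ∀ i : Fin G.k, (T i).Chain' fun a b => (b : ℝ) - (a : ℝ) ≤ ε)
    (σ : G.Profile) (hσ : MSNash G (fun _ => MRel.le) T σ) :
    ∀ (i : Fin G.k) (σi' : G.Strategy i),
      ¬ (G.reward i (G.play (G.updProf σ i σi')) ≤ G.reward i (G.play σ) - ε) :=
  epsilon_equilibria_correspondence_min_general G ε hε T hne hlow hhigh hgap σ hσ
end
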